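/- Let n ≥ 2 and let u be a convex continuous function on the open ball B₂ ⊂ ℝⁿ of radius 2 centered at the origin, such that u ≥ 0 in B₂, u = 0 on the slice {x ∈ B₂ : x_n = 0}, and u(t·e_n)/t → 0 as t → 0⁺. Then for every M > 0 there exists h₀ > 0 such that for all h ∈ (0, h₀), the open cylinder Q = {x = (x', x_n) ∈ ℝⁿ⁻¹ × ℝ : |x'| < 1, 0 < x_n < M·h} is contained in B₂ and u < h on Q. In particular, for every h > 0 small, the sublevel set {u < h} contains a cylinder {|x'| < 1} × (0, H) with h/H → 0 as h → 0⁺. -/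

import Mathlib

open scoped Topology

/-!
Write `x = θ · (s e_n) + (1 - θ) · q` with `θ = x_n / s` and `q` on the slice `{x_n = 0}`;
when `x_n ≤ s / 2` we have `θ ≤ 1/2`, so `|q| ≤ 2 |x'| < 2` and convexity with `u(q) = 0` gives
`u(x) ≤ x_n · u(s e_n) / s`. Choosing `s` with
`u(s e_n) / s < 1 / M`, which the hypothesis `u(t e_n) = o(t)` allows, yields `u(x) < h`
as soon as `x_n < M h` and `M h ≤ s / 2`.
-/

open Metric EuclideanSpace

theorem ConvexOn.le_mul_of_eq_zero {𝕜 E : Type*} [Field 𝕜] [LinearOrder 𝕜] [IsStrictOrderedRing 𝕜]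
    [AddCommGroup E] [Module 𝕜 E] {s : Set E} {f : E → 𝕜} (hf : ConvexOn 𝕜 s f) {a b : E}
    (ha : a ∈ s) (hb : b ∈ s) (hfb : f b = 0) {θ : 𝕜} (hθ₀ : 0 ≤ θ) (hθ₁ : θ ≤ 1) :
    f (θ • a + (1 - θ) • b) ≤ θ * f a := by
  simpa [hfb] using hf.2 ha hb hθ₀ (sub_nonneg.2 hθ₁) (add_sub_cancel θ 1)

namespace EuclideanSpace

variable {ι : Type*} [DecidableEq ι]

theorem smul_single_one (i : ι) (t : ℝ) : t • single i (1 : ℝ) = single i t := by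
  ext j
  by_cases h : j = i <;> simp [h]

variable [Fintype ι]

theorem norm_sub_single_self_sq (x : EuclideanSpace ℝ ι) (i : ι) :
    ‖x - single i (x i)‖ ^ 2 = ∑ j ∈ Finset.univ.erase i, x j ^ 2 := by
  rw [real_norm_sq_eq, ← Finset.sum_erase_add _ _ (Finset.mem_univ i)]
  refine (add_eq_left.2 (by simp)).trans (Finset.sum_congr rfl fun j hj => ?_)
  simp [Finset.ne_of_mem_erase hj]

theorem norm_sq_eq_norm_sub_single_self_sq_add (x : EuclideanSpace ℝ ι) (i : ι) :
    ‖x‖ ^ 2 = ‖x - single i (x i)‖ ^ 2 + x i ^ 2 := by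
  rw [norm_sub_single_self_sq, real_norm_sq_eq, Finset.sum_erase_add _ _ (Finset.mem_univ i)]

end EuclideanSpace

theorem ConvexOn.le_of_eq_zero_on_coord_hyperplane {ι : Type*} [Fintype ι] [DecidableEq ι]
    {u : EuclideanSpace ℝ ι → ℝ} {i : ι} (hu : ConvexOn ℝ (ball 0 2) u)
    (hslice : ∀ x ∈ ball (0 : EuclideanSpace ℝ ι) 2, x i = 0 → u x = 0)
    {s : ℝ} (hs₀ : 0 < s) (hs₂ : s < 2) {x : EuclideanSpace ℝ ι}
    (hx' : ‖x - single i (x i)‖ < 1) (hxi₀ : 0 ≤ x i) (hxi : x i ≤ s / 2) :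
    u x ≤ x i / s * u (single i s) := by
  set θ := x i / s
  have hθ : θ ≤ 1 / 2 := by rw [div_le_iff₀ hs₀]; linarith
  set q := (1 - θ)⁻¹ • (x - single i (x i))
  have hq : q ∈ ball 0 2 := by
    rw [mem_ball_zero_iff, norm_smul, norm_inv, Real.norm_of_nonneg (by linarith)]
    calc (1 - θ)⁻¹ * ‖x - single i (x i)‖ ≤ 2 * ‖x - single i (x i)‖ := by
          gcongr
          rw [inv_le_comm₀ (by linarith) two_pos]
          linarith
      _ < 2 := by linarith
  have hqi : q i = 0 := by simp [q]
  have hsingle : single i s ∈ ball (0 : EuclideanSpace ℝ ι) 2 := by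
    simpa [abs_of_pos hs₀] using hs₂
  have hx : θ • single i s + (1 - θ) • q = x := by
    rw [smul_inv_smul₀ (by linarith), ← smul_single_one, smul_smul,
      div_mul_cancel₀ _ hs₀.ne', smul_single_one, add_sub_cancel]
  calc u x = u (θ • single i s + (1 - θ) • q) := by rw [hx]
    _ ≤ θ * u (single i s) :=
      hu.le_mul_of_eq_zero hsingle hq (hslice q hq hqi) (by positivity) (by linarith)

/-- A nonnegative convex function on `B₂` vanishing on `{x_n = 0}` with
`u(t·e_n)/t → 0` as `t → 0⁺` is less than `h` on cylinders
`{|x'| < 1} × (0, M·h)` for all small `h > 0`. -/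
theorem sublevel_contains_cylinder {n : ℕ} (hn : 2 ≤ n)
    (u : EuclideanSpace ℝ (Fin n) → ℝ)
    (huconv : ConvexOn ℝ (Metric.ball 0 2) u)
    (hslice : ∀ x ∈ Metric.ball (0 : EuclideanSpace ℝ (Fin n)) 2,
      x (⟨n - 1, by omega⟩ : Fin n) = 0 → u x = 0)
    (hlittleo : Filter.Tendsto
      (fun t : ℝ => u (t • EuclideanSpace.single (⟨n - 1, by omega⟩ : Fin n) 1) / t)
      (𝓝[>] (0 : ℝ)) (𝓝 0)) :
    ∀ M : ℝ, 0 < M → ∃ h₀ : ℝ, 0 < h₀ ∧ ∀ h : ℝ, 0 < h → h < h₀ →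
      ∀ x : EuclideanSpace ℝ (Fin n),
        (∑ j ∈ Finset.univ.erase (⟨n - 1, by omega⟩ : Fin n), (x j) ^ 2) < 1 →
        0 < x (⟨n - 1, by omega⟩ : Fin n) →
        x (⟨n - 1, by omega⟩ : Fin n) < M * h →
        x ∈ Metric.ball (0 : EuclideanSpace ℝ (Fin n)) 2 ∧ u x < h := by
  intro M hM
  set i : Fin n := ⟨n - 1, by omega⟩
  obtain ⟨s, hs, hs₀, hs₂⟩ : ∃ s, u (single i s) / s < 1 / M ∧ 0 < s ∧ s < 2 := by
    have hsmall := hlittleo.eventually (gt_mem_nhds (one_div_pos.2 hM))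
    simp only [smul_single_one] at hsmall
    exact (hsmall.and (Ioo_mem_nhdsGT two_pos)).exists
  refine ⟨s / (2 * M), by positivity, fun h hh₀ hh x hx' hxi₀ hxi => ?_⟩
  have hxi_le : x i ≤ s / 2 :=
    calc x i ≤ M * h := hxi.le
      _ ≤ M * (s / (2 * M)) := by gcongr
      _ = s / 2 := by field_simp
  have hnorm' : ‖x - single i (x i)‖ < 1 := by
    rwa [← sq_lt_one_iff₀ (norm_nonneg _), norm_sub_single_self_sq]
  constructor
  · rw [mem_ball_zero_iff]
    refine lt_of_pow_lt_pow_left₀ 2 zero_le_two ?_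
    rw [norm_sq_eq_norm_sub_single_self_sq_add, norm_sub_single_self_sq]
    nlinarith
  · calc u x ≤ x i / s * u (single i s) :=
          huconv.le_of_eq_zero_on_coord_hyperplane hslice hs₀ hs₂ hnorm' hxi₀.le hxi_le
      _ = x i * (u (single i s) / s) := by ring
      _ ≤ x i * (1 / M) := by gcongr
      _ < M * h * (1 / M) := by gcongr
      _ = h := by field_simp
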